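/- Let f : ℝ² → ℝ be C², bounded with bounded second derivatives, and suppose f admits the strict modulus of continuity ω, i.e. |f(x) − f(y)| < ω(|x−y|) for all x ≠ y, where ω : [0,∞) → [0,∞) is C¹ on (0,∞), concave, increasing, ω(0) = 0, ω'(0⁺) =: ω'(0) finite and ω''(ξ) → −∞ as ξ → 0⁺. Then ‖∇f(x)‖ < ω'(0) for every x ∈ ℝ². -/

import Mathlib

open Set Filter

/-- If `f` is `C²` with bounded second derivative and admits the strict modulus of
continuity `ω` (concave, strictly increasing, `ω(0)=0`, finite right derivative `ω'0` at `0`,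
`ω'' → −∞` at `0⁺`), then `‖∇f(x)‖ < ω'(0)` for every `x`. -/
theorem stmt8 (f : EuclideanSpace ℝ (Fin 2) → ℝ) (ω : ℝ → ℝ) (ω'0 M : ℝ)
    (hf : ContDiff ℝ 2 f)
    (hfb : ∀ x, |f x| ≤ M)
    (hf2 : ∀ x, ‖iteratedFDeriv ℝ 2 f x‖ ≤ M)
    (hωC1 : ContDiffOn ℝ 1 ω (Ioi 0))
    (hωcont : ContinuousOn ω (Ici 0))
    (hωconc : ConcaveOn ℝ (Ici 0) ω)
    (hωmono : StrictMonoOn ω (Ici 0))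
    (hω0 : ω 0 = 0)
    (hω'0 : HasDerivWithinAt ω ω'0 (Ici 0) 0)
    (hω'' : Tendsto (fun ξ => deriv (deriv ω) ξ) (nhdsWithin 0 (Ioi 0)) atBot)
    (hmod : ∀ x y, x ≠ y → |f x - f y| < ω (dist x y)) :
    ∀ x, ‖gradient f x‖ < ω'0 := by
  have hM0 : (0:ℝ) ≤ M := le_trans (norm_nonneg _) (hf2 0)
  set K : ℝ := 2*M + 4 with hK
  have hKpos : (0:ℝ) < K := by positivity
  -- ω is differentiable on (0,∞)
  have hωdiff : ∀ u : ℝ, 0 < u → DifferentiableAt ℝ ω u := fun u hu =>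
    (hωC1.differentiableOn one_ne_zero).differentiableAt (isOpen_Ioi.mem_nhds hu)
  -- slope bound
  have hslope : ∀ u : ℝ, 0 < u → slope ω 0 u ≤ ω'0 := fun u hu =>
    hωconc.slope_le_of_hasDerivWithinAt self_mem_Ici (le_of_lt hu) hu hω'0
  have hω'0pos : 0 < ω'0 := by
    have h1 := hslope 1 one_pos
    have h2 : ω 0 < ω 1 := hωmono self_mem_Ici (by norm_num) one_pos
    rw [slope_def_field] at h1
    simp [hω0] at h1 h2
    linarith
  have hderivle : ∀ u : ℝ, 0 < u → deriv ω u ≤ ω'0 := fun u hu =>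
    (hωconc.deriv_le_slope self_mem_Ici (le_of_lt hu) hu (hωdiff u hu)).trans (hslope u hu)
  -- choose δ from ω'' → -∞
  have hev : ∀ᶠ ξ in nhdsWithin 0 (Ioi 0), deriv (deriv ω) ξ ≤ -K :=
    hω''.eventually (eventually_le_atBot _)
  obtain ⟨δ, hδpos, hδ⟩ : ∃ δ, 0 < δ ∧ ∀ ξ ∈ Ioc 0 δ, deriv (deriv ω) ξ ≤ -K := by
    rcases mem_nhdsGT_iff_exists_Ioc_subset.1 hev with ⟨u, hu, hsub⟩
    exact ⟨u, hu, fun ξ hξ => hsub hξ⟩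
  have hg2 : ∀ ξ ∈ Ioc 0 δ, DifferentiableAt ℝ (deriv ω) ξ := by
    intro ξ hξ
    by_contra h
    have h0 := deriv_zero_of_not_differentiableAt h
    have := hδ ξ hξ
    rw [h0] at this
    linarith
  -- claim: deriv ω c ≤ ω'0 - (K/2) c on (0,δ]
  have hclaim3 : ∀ c ∈ Ioc 0 δ, deriv ω c ≤ ω'0 - K/2 * c := by
    intro c hc
    have hc0 : 0 < c := hc.1
    have hc2 : c/2 ∈ Ioc 0 δ := ⟨by positivity, by linarith [hc.2]⟩
    have hmem : ∀ ξ ∈ Icc (c/2) c, ξ ∈ Ioc 0 δ := fun ξ hξ =>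
      ⟨lt_of_lt_of_le hc2.1 hξ.1, le_trans hξ.2 hc.2⟩
    have hcont : ContinuousOn (deriv ω) (Icc (c/2) c) := fun ξ hξ =>
      ((hg2 ξ (hmem ξ hξ)).continuousAt).continuousWithinAt
    have hderiv : ∀ ξ ∈ Ioo (c/2) c, HasDerivAt (deriv ω) (deriv (deriv ω) ξ) ξ := fun ξ hξ =>
      (hg2 ξ (hmem ξ ⟨le_of_lt hξ.1, le_of_lt hξ.2⟩)).hasDerivAt
    obtain ⟨ξ, hξ, hξeq⟩ :=
      exists_hasDerivAt_eq_slope (deriv ω) _ (by linarith) hcont hderiv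
    have h1 : deriv (deriv ω) ξ ≤ -K := hδ ξ (hmem ξ ⟨le_of_lt hξ.1, le_of_lt hξ.2⟩)
    have h2 : deriv ω (c/2) ≤ ω'0 := hderivle _ hc2.1
    rw [hξeq] at h1
    have hpos : 0 < c - c/2 := by linarith
    rw [div_le_iff₀ hpos] at h1
    nlinarith
  -- ω side bound : ω t ≤ ω'0 t - (K/4) t²  on (0,δ]
  have hωbound : ∀ t ∈ Ioc 0 δ, ω t ≤ ω'0 * t - K/4 * t^2 := by
    intro t ht
    set h : ℝ → ℝ := fun u => ω'0 * u - K/4 * u^2 - ω u with hh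
    have hcont : ContinuousOn h (Icc 0 t) := by
      apply ContinuousOn.sub
      · fun_prop
      · exact hωcont.mono (fun u hu => hu.1)
    have hd : ∀ c ∈ Ioo 0 t, HasDerivAt h (ω'0 - K/2 * c - deriv ω c) c := by
      intro c hc
      have h1 : HasDerivAt (fun u : ℝ => ω'0 * u - K/4 * u^2) (ω'0 - K/2 * c) c := by
        have h2 := ((hasDerivAt_id c).const_mul ω'0).sub
          ((hasDerivAt_pow 2 c).const_mul (K/4))
        refine h2.congr_deriv ?_
        ring
      exact h1.sub (hωdiff c hc.1).hasDerivAt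
    obtain ⟨c, hc, hceq⟩ := exists_hasDerivAt_eq_slope h _ ht.1 hcont hd
    have h3 := hclaim3 c ⟨hc.1, le_trans (le_of_lt hc.2) ht.2⟩
    have h0 : h 0 = 0 := by simp [hh, hω0]
    have hnn : 0 ≤ (h t - h 0) / (t - 0) := by rw [← hceq]; linarith
    rw [h0, sub_zero, sub_zero] at hnn
    have := (le_div_iff₀ ht.1).mp hnn
    have hht : 0 ≤ h t := by linarith
    simp only [hh] at hht
    linarith
  -- now the main argument
  intro x
  by_contra hcon
  push_neg at hcon
  set g := gradient f x with hg
  have hgne : g ≠ 0 := by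
    intro h
    rw [h] at hcon
    simp at hcon
    linarith
  set e : EuclideanSpace ℝ (Fin 2) := ‖g‖⁻¹ • g with hee
  have he : ‖e‖ = 1 := norm_smul_inv_norm hgne
  have hdf : Differentiable ℝ f := hf.differentiable (by norm_num)
  have hfdx : fderiv ℝ f x = (InnerProductSpace.toDual ℝ _) g := by
    rw [hg]
    simp [gradient]
  have hθ0 : (fderiv ℝ f x) e = ‖g‖ := by
    rw [hfdx]
    rw [InnerProductSpace.toDual_apply_apply]
    rw [hee, real_inner_smul_right, real_inner_self_eq_norm_sq]
    field_simp [norm_ne_zero_iff.2 hgne]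
  set θ : ℝ → ℝ := fun t => (fderiv ℝ f (x + t • e)) e with hθ
  have hfC1 : ContDiff ℝ 1 (fderiv ℝ f) := hf.fderiv_right (by norm_num)
  have hline : ∀ t : ℝ, HasDerivAt (fun s : ℝ => x + s • e) e t := by
    intro t
    simpa using ((hasDerivAt_id t).smul_const e).const_add x
  have hθd : ∀ t : ℝ, HasDerivAt θ ((fderiv ℝ (fderiv ℝ f) (x + t • e) e) e) t := by
    intro t
    have h1 : HasDerivAt (fun s : ℝ => fderiv ℝ f (x + s • e))
        (fderiv ℝ (fderiv ℝ f) (x + t • e) e) t :=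
      (hfC1.differentiable one_ne_zero _).hasFDerivAt.comp_hasDerivAt t (hline t)
    exact h1.clm_apply (hasDerivAt_const t e) |>.congr_deriv (by simp)
  have hθbound : ∀ t : ℝ, |(fderiv ℝ (fderiv ℝ f) (x + t • e) e) e| ≤ M := by
    intro t
    have h2 := iteratedFDeriv_two_apply (𝕜 := ℝ) f (x + t • e) ![e, e]
    have h3 := (iteratedFDeriv ℝ 2 f (x + t • e)).le_opNorm ![e, e]
    simp only [Fin.prod_univ_two, Matrix.cons_val_zero, Matrix.cons_val_one, Matrix.head_cons,
      he, mul_one] at h2 h3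
    rw [h2] at h3
    calc |(fderiv ℝ (fderiv ℝ f) (x + t • e) e) e| ≤ ‖iteratedFDeriv ℝ 2 f (x + t • e)‖ := h3
      _ ≤ M := hf2 _
  have hθlow : ∀ c : ℝ, 0 < c → θ 0 - M * c ≤ θ c := by
    intro c hc
    have hcont : ContinuousOn θ (Icc 0 c) := fun s _ =>
      ((hθd s).continuousAt).continuousWithinAt
    obtain ⟨ξ, hξ, heq⟩ := exists_hasDerivAt_eq_slope θ _ hc hcont (fun s _ => hθd s)
    have h1 := (abs_le.mp (hθbound ξ)).1
    rw [heq] at h1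
    rw [sub_zero] at h1
    have := (le_div_iff₀ hc).mp h1
    linarith
  -- lower bound for f along the segment
  set t₀ : ℝ := δ/2 with ht₀
  have ht₀pos : 0 < t₀ := by positivity
  have ht₀mem : t₀ ∈ Ioc 0 δ := ⟨ht₀pos, by rw [ht₀]; linarith⟩
  set ψ : ℝ → ℝ := fun t => f (x + t • e) - ω'0 * t + M/2 * t^2 with hψ
  have hψd : ∀ t : ℝ, HasDerivAt ψ (θ t - ω'0 + M * t) t := by
    intro t
    have h1 : HasDerivAt (fun s : ℝ => f (x + s • e)) (θ t) t :=
      (hdf _).hasFDerivAt.comp_hasDerivAt t (hline t)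
    have h2 := (h1.sub ((hasDerivAt_id t).const_mul ω'0)).add
      ((hasDerivAt_pow 2 t).const_mul (M/2))
    refine h2.congr_deriv ?_
    ring
  have hψcont : ContinuousOn ψ (Icc 0 t₀) := fun s _ =>
    ((hψd s).continuousAt).continuousWithinAt
  obtain ⟨c, hc, hceq⟩ := exists_hasDerivAt_eq_slope ψ _ ht₀pos hψcont (fun s _ => hψd s)
  have hθ0' : θ 0 = ‖g‖ := by
    simp only [hθ, zero_smul, add_zero]
    exact hθ0
  have hψ'nn : 0 ≤ θ c - ω'0 + M * c := by
    have := hθlow c hc.1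
    rw [hθ0'] at this
    linarith [hcon]
  rw [hceq] at hψ'nn
  rw [sub_zero] at hψ'nn
  have hψge : ψ 0 ≤ ψ t₀ := by
    have := (le_div_iff₀ ht₀pos).mp hψ'nn
    linarith
  have hψ0 : ψ 0 = f x := by simp [hψ]
  -- f (x + t₀ e) ≥ f x + ω'0 t₀ - M/2 t₀²
  have hlow : f x + ω'0 * t₀ - M/2 * t₀^2 ≤ f (x + t₀ • e) := by
    have h1 : ψ t₀ = f (x + t₀ • e) - ω'0 * t₀ + M/2 * t₀^2 := rfl
    rw [hψ0] at hψge
    rw [h1] at hψge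
    linarith
  -- strict modulus bound
  have hne : x + t₀ • e ≠ x := by
    intro h
    have : t₀ • e = 0 := by
      have := congrArg (fun y => y - x) h
      simpa [add_sub_cancel_left] using this
    rcases smul_eq_zero.mp this with h' | h'
    · exact absurd h' (ne_of_gt ht₀pos)
    · rw [h'] at he; simp at he
  have hdist : dist (x + t₀ • e) x = t₀ := by
    rw [dist_eq_norm]
    simp [norm_smul, he, abs_of_pos ht₀pos]
  have hm := hmod (x + t₀ • e) x hne
  rw [hdist] at hm
  have hup := (abs_lt.mp hm).2
  have hωb := hωbound t₀ ht₀mem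
  nlinarith [sq_nonneg t₀, ht₀pos]
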